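/- Let (M, E*) be a constrained matrix with extended matrix M_e. Then (M, E*) admits a persistent perfect phylogeny consistent with E* if and only if M_e admits a completion whose columns are pairwise laminar, i.e., a completion that admits a rooted perfect phylogeny. -/

import Mathlib

/-! Common definitions for persistent perfect phylogeny formalizations. -/

/-- `AncRel parent i j` : node `i` is an ancestor (or equal to) node `j`
in the rooted tree given by the parent function. -/
def AncRel (parent : ℕ → ℕ) (i j : ℕ) : Prop := ∃ k : ℕ, parent^[k] j = i

/-- A persistent perfect phylogeny (p-pp) for the binary matrix `M`.
Nodes are `0, …, n-1`, the root is `0`, and each non-root node `i` has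
parent `parent i < i`; the (unique) edge entering `i` is identified with `i`. -/
structure PPTree (S C : Type*) (M : S → C → Bool) where
  n : ℕ
  n_pos : 0 < n
  parent : ℕ → ℕ
  parent_lt : ∀ i, 0 < i → i < n → parent i < i
  label : ℕ → C → Bool
  root_label : ∀ c, label 0 c = false
  /-- for each character there are at most two edges across which its state changes -/
  changes_le_two : ∀ c : C, ∀ i j k : ℕ,
    (0 < i ∧ i < n ∧ label (parent i) c ≠ label i c) →
    (0 < j ∧ j < n ∧ label (parent j) c ≠ label j c) →
    (0 < k ∧ k < n ∧ label (parent k) c ≠ label k c) →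
    i = j ∨ i = k ∨ j = k
  /-- two change edges of the same character lie on one root-to-leaf path,
  the higher one being the gain `c⁺` (0→1) and the lower one the loss `c⁻` (1→0) -/
  changes_on_path : ∀ c : C, ∀ i j : ℕ,
    (0 < i ∧ i < n ∧ label (parent i) c ≠ label i c) →
    (0 < j ∧ j < n ∧ label (parent j) c ≠ label j c) →
    i ≠ j →
    (AncRel parent i j ∧ label (parent i) c = false ∧ label i c = true ∧
      label (parent j) c = true ∧ label j c = false) ∨
    (AncRel parent j i ∧ label (parent j) c = false ∧ label j c = true ∧
      label (parent i) c = true ∧ label i c = false)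
  /-- if a character changes on exactly one edge, the change is a gain (0→1) -/
  single_change_gain : ∀ c : C, ∀ i : ℕ,
    (0 < i ∧ i < n ∧ label (parent i) c ≠ label i c) →
    (∀ j : ℕ, (0 < j ∧ j < n ∧ label (parent j) c ≠ label j c) → j = i) →
    (label (parent i) c = false ∧ label i c = true)
  /-- each row of `M` labels exactly one node of the tree -/
  rows_label : ∀ s : S, ∃! x : ℕ, x < n ∧ ∀ c, label x c = M s c

/-- Character `c` is persistent in the node `x`: the path from the root to `x`
contains both an edge labeled `c⁺` and an edge labeled `c⁻`. -/
def PPTree.persistentAt {S C : Type*} {M : S → C → Bool} (T : PPTree S C M)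
    (x : ℕ) (c : C) : Prop :=
  (∃ i, 0 < i ∧ i < T.n ∧ AncRel T.parent i x ∧
    T.label (T.parent i) c = false ∧ T.label i c = true) ∧
  (∃ j, 0 < j ∧ j < T.n ∧ AncRel T.parent j x ∧
    T.label (T.parent j) c = true ∧ T.label j c = false)

/-- A p-pp tree is consistent with the constraint set `E` if, for every
`(s,c) ∈ E`, the character `c` is not persistent in the species `s`. -/
def PPTree.consistent {S C : Type*} {M : S → C → Bool} (T : PPTree S C M)
    (E : Set (S × C)) : Prop :=
  ∀ p ∈ E, ∀ x : ℕ, x < T.n → (∀ c, T.label x c = M p.1 c) →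
    ¬ T.persistentAt x p.2

/-- Two (distinct) characters are in conflict when all four configurations
`(0,0), (0,1), (1,0), (1,1)` occur among the species. -/
def Conflicting {S C : Type*} (M : S → C → Bool) (c₁ c₂ : C) : Prop :=
  c₁ ≠ c₂ ∧
  (∃ s, M s c₁ = false ∧ M s c₂ = false) ∧
  (∃ s, M s c₁ = false ∧ M s c₂ = true) ∧
  (∃ s, M s c₁ = true ∧ M s c₂ = false) ∧
  (∃ s, M s c₁ = true ∧ M s c₂ = true)

/-- The conflict graph of `M` is empty: no two characters are in conflict. -/
def EmptyConflictGraph {S C : Type*} (M : S → C → Bool) : Prop :=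
  ∀ c₁ c₂ : C, ¬ Conflicting M c₁ c₂

/-- The column of a character, as a set of species. -/
def ColSet {S C : Type*} (M : S → C → Bool) (c : C) : Set S := {s | M s c = true}

/-- Column `c⁺` of the completion of the extended matrix of `(M,E)` determined by
the choice function `f` (the pair `(?,?)` of species `s` and character `c` is
completed to `(1,1)` iff `f s c` holds). -/
def ColPlus {S C : Type*} (M : S → C → Bool) (E : Set (S × C))
    (f : S → C → Prop) (c : C) : Set S :=
  {s | M s c = true ∨ ((s, c) ∉ E ∧ M s c = false ∧ f s c)}

/-- Column `c⁻` of the completion of the extended matrix of `(M,E)` determined by `f`. -/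
def ColMinus {S C : Type*} (M : S → C → Bool) (E : Set (S × C))
    (f : S → C → Prop) (c : C) : Set S :=
  {s | (s, c) ∉ E ∧ M s c = false ∧ f s c}

/-- The column of a signed character (`(c, true)` is `c⁺`, `(c, false)` is `c⁻`). -/
def ColOf {S C : Type*} (M : S → C → Bool) (E : Set (S × C))
    (f : S → C → Prop) : C × Bool → Set S :=
  fun p => if p.2 then ColPlus M E f p.1 else ColMinus M E f p.1

/-- Two sets are laminar: disjoint or one contains the other. -/
def LaminarPair {S : Type*} (X Y : Set S) : Prop := X ∩ Y = ∅ ∨ X ⊆ Y ∨ Y ⊆ X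

/-- The completion of the extended matrix of `(M,E)` given by `f` has pairwise
laminar columns, i.e. it admits a rooted (directed) perfect phylogeny. -/
def LaminarCompletion {S C : Type*} (M : S → C → Bool) (E : Set (S × C))
    (f : S → C → Prop) : Prop :=
  ∀ p q : C × Bool, LaminarPair (ColOf M E f p) (ColOf M E f q)

/-- The state of a character in a red-black graph. -/
inductive CharState : Type
  | inactive : CharState
  | active : CharState
  | free : CharState
deriving DecidableEq

/-- A red-black graph: an edge-bicolored bipartite graph on species and
characters, together with a state for each character and a set of forbidden
(species, character) pairs. -/
structure RBGraph (S C : Type*) where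
  black : S → C → Prop
  red : S → C → Prop
  charState : C → CharState
  forbidden : Set (S × C)

/-- The underlying simple graph of a red-black graph (edges of either color). -/
def RBGraph.graph {S C : Type*} (G : RBGraph S C) : SimpleGraph (S ⊕ C) where
  Adj v w :=
    (∃ s c, v = Sum.inl s ∧ w = Sum.inr c ∧ (G.black s c ∨ G.red s c)) ∨
    (∃ s c, w = Sum.inl s ∧ v = Sum.inr c ∧ (G.black s c ∨ G.red s c))
  symm := ⟨fun v w h => Or.symm h⟩
  loopless := ⟨by
    rintro v (⟨s, c, h₁, h₂, -⟩ | ⟨s, c, h₁, h₂, -⟩) <;> subst h₁ <;> simp at h₂⟩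

/-- The subgraph of a red-black graph formed by the red edges only. -/
def RBGraph.redGraph {S C : Type*} (G : RBGraph S C) : SimpleGraph (S ⊕ C) where
  Adj v w :=
    (∃ s c, v = Sum.inl s ∧ w = Sum.inr c ∧ G.red s c) ∨
    (∃ s c, w = Sum.inl s ∧ v = Sum.inr c ∧ G.red s c)
  symm := ⟨fun v w h => Or.symm h⟩
  loopless := ⟨by
    rintro v (⟨s, c, h₁, h₂, -⟩ | ⟨s, c, h₁, h₂, -⟩) <;> subst h₁ <;> simp at h₂⟩

/-- The species `s` belongs to the connected component `𝒞(c)` of character `c`. -/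
def RBGraph.reach {S C : Type*} (G : RBGraph S C) (c : C) (s : S) : Prop :=
  G.graph.Reachable (Sum.inr c) (Sum.inl s)

/-- The realization of character `c` is possible in `G`. -/
def RealizePossible {S C : Type*} (G : RBGraph S C) (c : C) : Prop :=
  match G.charState c with
  | CharState.inactive => ∀ s, G.reach c s → (s, c) ∉ G.forbidden
  | CharState.active => ∀ s, G.reach c s → G.red s c
  | CharState.free => False

/-- The realization of character `c` in the red-black graph `G`.
If `c` is inactive: add a red edge `{s,c}` for every species `s ∈ 𝒞(c)` not
adjacent to `c`, delete all black edges incident to `c`, forbid `(s,c)` for all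
`s ∉ 𝒞(c)`, and make `c` active.  If `c` is active: delete all red edges
incident to `c` and make `c` free. -/
def realize {S C : Type*} [DecidableEq C] (G : RBGraph S C) (c : C) : RBGraph S C :=
  match G.charState c with
  | CharState.inactive =>
    { black := fun s c' => G.black s c' ∧ c' ≠ c
      red := fun s c' =>
        if c' = c then G.red s c ∨ (G.reach c s ∧ ¬ G.black s c ∧ ¬ G.red s c)
        else G.red s c'
      charState := fun c' => if c' = c then CharState.active else G.charState c'
      forbidden := G.forbidden ∪ {p | p.2 = c ∧ ¬ G.reach c p.1} }
  | CharState.active =>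
    { black := G.black
      red := fun s c' => G.red s c' ∧ c' ≠ c
      charState := fun c' => if c' = c then CharState.free else G.charState c'
      forbidden := G.forbidden }
  | CharState.free => G

/-- Realize a sequence of characters, in order. -/
def realizeList {S C : Type*} [DecidableEq C] (G : RBGraph S C) : List C → RBGraph S C
  | [] => G
  | c :: l => realizeList (realize G c) l

/-- All realizations of the sequence, performed in order, are possible. -/
def AllPossible {S C : Type*} [DecidableEq C] (G : RBGraph S C) : List C → Prop
  | [] => True
  | c :: l => RealizePossible G c ∧ AllPossible (realize G c) l

/-- The initial red-black graph of the constrained matrix `(M, E)`: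
a black edge `{s,c}` iff `M s c = 1`, all characters inactive, forbidden set `E`. -/
def initRB {S C : Type*} (M : S → C → Bool) (E : Set (S × C)) : RBGraph S C :=
  { black := fun s c => M s c = true
    red := fun _ _ => False
    charState := fun _ => CharState.inactive
    forbidden := E }

/-- The red-black graph has no edges at all. -/
def Edgeless {S C : Type*} (G : RBGraph S C) : Prop :=
  ∀ (s : S) (c : C), ¬ G.black s c ∧ ¬ G.red s c

/-- A proper sequence of signed characters: each signed character occurs at most
once, and `c⁻` occurs only after the corresponding `c⁺`. -/
def ProperSigned {C : Type*} [DecidableEq C] (R : List (C × Bool)) : Prop :=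
  (∀ σ : C × Bool, R.count σ ≤ 1) ∧
  (∀ c : C, (c, false) ∈ R →
    ∃ i j : Fin R.length, (i : ℕ) < (j : ℕ) ∧ R.get i = (c, true) ∧ R.get j = (c, false))

/-- A successful c-reduction of the red-black graph of `(M, E)`: a proper signed
sequence containing `c⁺` for every character, all of whose realizations are
possible in order, and whose final red-black graph has no edges. -/
def SuccessfulCReduction {S C : Type*} [DecidableEq C] (M : S → C → Bool)
    (E : Set (S × C)) (R : List (C × Bool)) : Prop :=
  ProperSigned R ∧ (∀ c : C, (c, true) ∈ R) ∧
  AllPossible (initRB M E) (R.map Prod.fst) ∧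
  Edgeless (realizeList (initRB M E) (R.map Prod.fst))

/-- The canonical completion of the extended matrix of `(M,E)` associated with a
successful c-reduction `R`: at the first realization of each character `c`, the
pair of species `s` and character `c` is completed to `(1,1)` iff `s ∈ 𝒞(c)` at
that moment. -/
def canonComp {S C : Type*} [DecidableEq C] (M : S → C → Bool) (E : Set (S × C))
    (R : List (C × Bool)) : S → C → Prop :=
  fun s c =>
    (realizeList (initRB M E)
      ((R.takeWhile (fun p => decide (p ≠ (c, true)))).map Prod.fst)).reach c s

/-- `L` is a label sequence of node `x` of the p-pp tree `T`: it lists, without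
repetition and in root-to-`x` order, exactly the signed characters labeling the
edges on the path from the root to `x` (`(c, true)` stands for `c⁺`,
`(c, false)` for `c⁻`). -/
def IsLabelSeq {S C : Type*} {M : S → C → Bool} (T : PPTree S C M) (x : ℕ)
    (L : List (C × Bool)) : Prop :=
  L.Nodup ∧
  (∀ σ : C × Bool, σ ∈ L ↔ ∃ i, 0 < i ∧ i < T.n ∧ AncRel T.parent i x ∧
    T.label (T.parent i) σ.1 = (!σ.2) ∧ T.label i σ.1 = σ.2) ∧
  (∀ p q : Fin L.length, (p : ℕ) < (q : ℕ) → ∀ i j : ℕ,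
    (0 < i ∧ i < T.n ∧ AncRel T.parent i x ∧
      T.label (T.parent i) (L.get p).1 = (!(L.get p).2) ∧
      T.label i (L.get p).1 = (L.get p).2) →
    (0 < j ∧ j < T.n ∧ AncRel T.parent j x ∧
      T.label (T.parent j) (L.get q).1 = (!(L.get q).2) ∧
      T.label j (L.get q).1 = (L.get q).2) →
    AncRel T.parent i j)

/-- A solution of a General Character Compatibility instance (with all character
trees equal to the directed path `0 → 1 → 2`). -/
structure GCCSolution (S C : Type*) (α : C → S → Set (Fin 3)) where
  n : ℕ
  n_pos : 0 < n
  parent : ℕ → ℕ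
  parent_lt : ∀ i, 0 < i → i < n → parent i < i
  st : ℕ → C → Fin 3
  /-- every species has a node whose states belong to the prescribed sets -/
  species_node : ∀ s : S, ∃ v : ℕ, v < n ∧ ∀ c : C, st v c ∈ α c s
  /-- for each character and state, the nodes carrying that state induce a
  connected subtree: any two of them are joined by a path inside the set,
  through a common ancestor carrying the same state -/
  state_connected : ∀ (c : C) (q : Fin 3) (u v : ℕ), u < n → v < n →
    st u c = q → st v c = q →
    ∃ r : ℕ, r < n ∧ st r c = q ∧ AncRel parent r u ∧ AncRel parent r v ∧
      (∀ w : ℕ, AncRel parent r w → AncRel parent w u → st w c = q) ∧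
      (∀ w : ℕ, AncRel parent r w → AncRel parent w v → st w c = q)
  /-- along each edge a state is unchanged or moves one step along `0 → 1 → 2` -/
  edge_ok : ∀ (c : C) (i : ℕ), 0 < i → i < n →
    st (parent i) c = st i c ∨
    (st (parent i) c = 0 ∧ st i c = 1) ∨
    (st (parent i) c = 1 ∧ st i c = 2)

/-! A p-pp tree `T` gives the completion that turns `(?,?)` at `(s, c)` into `(1,1)` exactly
when the path to the node of `s` crosses the `c⁻` edge. Its column `c⁺` (resp. `c⁻`) is then
the set of species below the `c⁺` (resp. `c⁻`) edge, consistency keeping the pairs of `E` at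
`(0,0)`, and the sets of species below the edges of a tree are laminar.

Conversely, encode a node by the set of signed characters on its root path: the nodes are `∅`
and the sets of columns shared by nonempty sets of species. Laminarity makes the nodes below any
node a chain, so attaching each node to its largest proper subnode gives a tree, and reading
`c⁺` as a gain and `c⁻` as a loss of `c` makes it a p-pp tree once distinct nodes carry distinct
labels. Two nodes with the same labels differ by whole pairs `c⁺, c⁻`, and erasing these pairs on
the smallest of their `c⁻` columns leaves a laminar completion with fewer persistent entries; so
a laminar completion with the fewest persistent entries works. Its tree is consistent with `E`
because the column `c⁻` avoids the species `s` with `(s, c) ∈ E`. -/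

namespace LaminarPair

variable {α : Type*} {X Y K : Set α}

theorem symm (h : LaminarPair X Y) : LaminarPair Y X := by
  rcases h with h | h | h
  · exact Or.inl (Set.inter_comm X Y ▸ h)
  · exact Or.inr (Or.inr h)
  · exact Or.inr (Or.inl h)

theorem subset_or_subset (h : LaminarPair X Y) (hXY : (X ∩ Y).Nonempty) : X ⊆ Y ∨ Y ⊆ X :=
  h.resolve_left hXY.ne_empty

theorem subset_of_ncard_le (h : LaminarPair X Y) (hXY : (X ∩ Y).Nonempty)
    (hcard : X.ncard ≤ Y.ncard) (hX : X.Finite) : X ⊆ Y :=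
  (h.subset_or_subset hXY).elim id fun hYX => (Set.eq_of_subset_of_ncard_le hYX hcard hX).ge

theorem diff (h : LaminarPair X Y) (K : Set α) : LaminarPair (X \ K) (Y \ K) := by
  rcases h with h | h | h
  · exact Or.inl (Set.subset_empty_iff.mp
      (h ▸ Set.inter_subset_inter Set.sdiff_subset Set.sdiff_subset))
  · exact Or.inr (Or.inl (Set.sdiff_subset_sdiff_left h))
  · exact Or.inr (Or.inr (Set.sdiff_subset_sdiff_left h))

theorem diff_left (hXY : LaminarPair X Y) (hYK : LaminarPair Y K) (hmid : K ⊆ Y → ¬ Y ⊆ X) :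
    LaminarPair (X \ K) Y := by
  rcases hXY with h | h | hYX
  · exact Or.inl (Set.subset_empty_iff.mp (h ▸ Set.inter_subset_inter_left _ Set.sdiff_subset))
  · exact Or.inr (Or.inl (Set.sdiff_subset.trans h))
  rcases hYK with h | h | h
  · exact Or.inr (Or.inr fun s hs => ⟨hYX hs, fun hK => h.subset ⟨hs, hK⟩⟩)
  · exact Or.inl (Set.eq_empty_of_forall_notMem fun s ⟨⟨_, hK⟩, hY⟩ => hK (h hY))
  · exact absurd hYX (hmid h)

end LaminarPair

/-- Ancestry that, unlike `AncRel`, does not follow `parent` past the root `0`, where a `PPTree`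
leaves it unconstrained. -/
def RootedAnc (parent : ℕ → ℕ) : ℕ → ℕ → Prop :=
  Relation.ReflTransGen fun a b => b ≠ 0 ∧ parent b = a

namespace RootedAnc

variable {parent : ℕ → ℕ} {i j x : ℕ}

theorem refl (x : ℕ) : RootedAnc parent x x := Relation.ReflTransGen.refl

theorem parent_left (hx : x ≠ 0) : RootedAnc parent (parent x) x :=
  Relation.ReflTransGen.single ⟨hx, rfl⟩

theorem trans (hij : RootedAnc parent i j) (hjx : RootedAnc parent j x) : RootedAnc parent i x :=
  Relation.ReflTransGen.trans hij hjx

theorem ancRel (h : RootedAnc parent i x) : AncRel parent i x := by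
  induction h with
  | refl => exact ⟨0, rfl⟩
  | tail _ hstep ih =>
    obtain ⟨k, hk⟩ := ih
    exact ⟨k + 1, by rw [Function.iterate_succ_apply, hstep.2, hk]⟩

theorem total (hi : RootedAnc parent i x) (hj : RootedAnc parent j x) :
    RootedAnc parent i j ∨ RootedAnc parent j i := by
  have hunique : Relator.RightUnique (Function.swap fun a b => b ≠ 0 ∧ parent b = a) :=
    fun _ _ _ h h' => h.2.symm.trans h'.2
  exact (Relation.ReflTransGen.total_of_right_unique hunique
    (Relation.reflTransGen_swap.mpr hi) (Relation.reflTransGen_swap.mpr hj)).symm.imp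
    Relation.reflTransGen_swap.mp Relation.reflTransGen_swap.mp

theorem exists_change {a b : ℕ} (g : ℕ → Bool)
    (h : RootedAnc parent a b) (hab : g a ≠ g b) :
    ∃ e, e ≠ 0 ∧ RootedAnc parent a (parent e) ∧ RootedAnc parent e b ∧
      g (parent e) = g a ∧ g e = g b := by
  induction h with
  | refl => exact absurd rfl hab
  | @tail y z hay hstep ih =>
    obtain ⟨hz, rfl⟩ := hstep
    by_cases hyz : g (parent z) = g z
    · obtain ⟨e, he, hae, hez, hea, heb⟩ := ih (hyz ▸ hab)
      exact ⟨e, he, hae, hez.trans (parent_left hz), hea, heb.trans hyz⟩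
    · refine ⟨z, hz, hay, refl z, ?_, rfl⟩
      cases h1 : g a <;> cases h2 : g z <;> cases h3 : g (parent z) <;> simp_all

variable {n : ℕ}

theorem le (hp : ∀ i, 0 < i → i < n → parent i < i) (h : RootedAnc parent i x) (hx : x < n) :
    i ≤ x := by
  induction h with
  | refl => rfl
  | tail _ hstep ih =>
    have := hp _ (Nat.pos_of_ne_zero hstep.1) hx
    rw [hstep.2] at this
    exact (ih (this.trans hx)).trans this.le

theorem zero_left (hp : ∀ i, 0 < i → i < n → parent i < i) (hx : x < n) :
    RootedAnc parent 0 x := by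
  induction x using Nat.strong_induction_on with
  | _ x ih =>
    rcases Nat.eq_zero_or_pos x with rfl | hx0
    · exact refl 0
    · have hpx := hp x hx0 hx
      exact (ih _ hpx (hpx.trans hx)).trans (parent_left hx0.ne')

end RootedAnc

namespace PPTree

variable {S C : Type*} {M : S → C → Bool} (T : PPTree S C M)

def IsFlip (σ : C × Bool) (e : ℕ) : Prop :=
  0 < e ∧ e < T.n ∧ T.label (T.parent e) σ.1 = !σ.2 ∧ T.label e σ.1 = σ.2

variable {T}

theorem IsFlip.eq {σ : C × Bool} {e e' : ℕ} (h : T.IsFlip σ e) (h' : T.IsFlip σ e') :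
    e = e' := by
  have hchange {e : ℕ} (h : T.IsFlip σ e) :
      0 < e ∧ e < T.n ∧ T.label (T.parent e) σ.1 ≠ T.label e σ.1 :=
    ⟨h.1, h.2.1, by rw [h.2.2.1, h.2.2.2]; cases σ.2 <;> decide⟩
  by_contra hne
  rcases T.changes_on_path σ.1 e e' (hchange h) (hchange h') hne with
    ⟨-, h1, -, -, h4⟩ | ⟨-, h1, -, -, h4⟩
  · rw [h.2.2.1] at h1; rw [h'.2.2.2] at h4; cases σ.2 <;> simp_all
  · rw [h'.2.2.1] at h1; rw [h.2.2.2] at h4; cases σ.2 <;> simp_all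

theorem rootedAnc_le {i x : ℕ} (h : RootedAnc T.parent i x) (hx : x < T.n) : i ≤ x :=
  RootedAnc.le T.parent_lt h hx

theorem exists_isFlip_of_rootedAnc {a x : ℕ} {c : C} (h : RootedAnc T.parent a x) (hx : x < T.n)
    (hax : T.label a c ≠ T.label x c) :
    ∃ e, T.IsFlip (c, T.label x c) e ∧ RootedAnc T.parent a (T.parent e) ∧
      RootedAnc T.parent e x := by
  obtain ⟨e, he0, hae, hex, hpe, he⟩ := h.exists_change (T.label · c) hax
  refine ⟨e, ⟨Nat.pos_of_ne_zero he0, (rootedAnc_le hex hx).trans_lt hx, ?_, he⟩, hae, hex⟩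
  rw [hpe]
  cases h1 : T.label a c <;> cases h2 : T.label x c <;> simp_all

theorem exists_isFlip_true {x : ℕ} {c : C} (hx : x < T.n) (h : T.label x c = true) :
    ∃ e, T.IsFlip (c, true) e ∧ RootedAnc T.parent e x := by
  obtain ⟨e, he, -, hex⟩ := exists_isFlip_of_rootedAnc (c := c)
    (RootedAnc.zero_left T.parent_lt hx) hx (by simp [T.root_label, h])
  exact ⟨e, h ▸ he, hex⟩

theorem exists_isFlip_true_of_isFlip_false {l x : ℕ} {c : C} (hl : T.IsFlip (c, false) l)
    (hlx : RootedAnc T.parent l x) : ∃ g, T.IsFlip (c, true) g ∧ RootedAnc T.parent g x := by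
  have hpl : T.parent l < T.n := (T.parent_lt l hl.1 hl.2.1).trans hl.2.1
  obtain ⟨g, hg, hgl⟩ := exists_isFlip_true hpl hl.2.2.1
  exact ⟨g, hg, hgl.trans ((RootedAnc.parent_left hl.1.ne').trans hlx)⟩

theorem exists_isFlip_false {g x : ℕ} {c : C} (hg : T.IsFlip (c, true) g)
    (hgx : RootedAnc T.parent g x) (hx : x < T.n) (h : T.label x c = false) :
    ∃ e, T.IsFlip (c, false) e ∧ RootedAnc T.parent e x := by
  obtain ⟨e, he, -, hex⟩ := exists_isFlip_of_rootedAnc (c := c) hgx hx (by simp [hg.2.2.2, h])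
  exact ⟨e, h ▸ he, hex⟩

/-- Regaining `c` below its loss edge would need a second gain edge, strictly below the first. -/
theorem label_eq_false_of_isFlip_false {l x : ℕ} {c : C} (hl : T.IsFlip (c, false) l)
    (hlx : RootedAnc T.parent l x) (hx : x < T.n) : T.label x c = false := by
  by_contra h
  rw [Bool.not_eq_false] at h
  obtain ⟨e, he, hle, -⟩ := exists_isFlip_of_rootedAnc (c := c) hlx hx (by simp [hl.2.2.2, h])
  have hpl : T.parent l < T.n := (T.parent_lt l hl.1 hl.2.1).trans hl.2.1
  obtain ⟨g, hg, hgl⟩ := exists_isFlip_true hpl hl.2.2.1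
  rw [h] at he
  have hpe : T.parent e < T.n := (T.parent_lt e he.1 he.2.1).trans he.2.1
  have hel : e ≤ T.parent l := he.eq hg ▸ rootedAnc_le hgl hpl
  have hle : l ≤ T.parent e := rootedAnc_le hle hpe
  have := T.parent_lt l hl.1 hl.2.1
  have := T.parent_lt e he.1 he.2.1
  omega

theorem persistentAt_of_isFlip {g l x : ℕ} {c : C} (hg : T.IsFlip (c, true) g)
    (hgx : RootedAnc T.parent g x) (hl : T.IsFlip (c, false) l)
    (hlx : RootedAnc T.parent l x) : T.persistentAt x c :=
  ⟨⟨g, hg.1, hg.2.1, hgx.ancRel, hg.2.2⟩, ⟨l, hl.1, hl.2.1, hlx.ancRel, hl.2.2⟩⟩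

variable (T)

noncomputable def nodeOf (s : S) : ℕ := (T.rows_label s).exists.choose

theorem nodeOf_lt (s : S) : T.nodeOf s < T.n := (T.rows_label s).exists.choose_spec.1

theorem label_nodeOf (s : S) (c : C) : T.label (T.nodeOf s) c = M s c :=
  (T.rows_label s).exists.choose_spec.2 c

def completion (s : S) (c : C) : Prop :=
  ∃ e, T.IsFlip (c, false) e ∧ RootedAnc T.parent e (T.nodeOf s)

variable {T}

theorem colOf_completion {E : Set (S × C)} (hT : T.consistent E) (σ : C × Bool) :
    ColOf M E T.completion σ = {s | ∃ e, T.IsFlip σ e ∧ RootedAnc T.parent e (T.nodeOf s)} := by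
  have not_mem_E {s : S} {c : C} (hs : T.completion s c) : (s, c) ∉ E := fun hE => by
    obtain ⟨l, hl, hls⟩ := hs
    obtain ⟨g, hg, hgs⟩ := exists_isFlip_true_of_isFlip_false hl hls
    exact hT (s, c) hE _ (T.nodeOf_lt s) (T.label_nodeOf s) (persistentAt_of_isFlip hg hgs hl hls)
  obtain ⟨c, _ | _⟩ := σ <;> ext s
  · refine ⟨fun h => h.2.2, fun h => ⟨not_mem_E h, ?_, h⟩⟩
    obtain ⟨l, hl, hls⟩ := h
    rw [← T.label_nodeOf]
    exact label_eq_false_of_isFlip_false hl hls (T.nodeOf_lt s)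
  · constructor
    · rintro (hM | ⟨-, -, l, hl, hls⟩)
      · exact exists_isFlip_true (T.nodeOf_lt s) ((T.label_nodeOf s c).trans hM)
      · exact exists_isFlip_true_of_isFlip_false hl hls
    · rintro ⟨g, hg, hgs⟩
      cases hM : M s c
      · have hs : T.completion s c := exists_isFlip_false hg hgs (T.nodeOf_lt s)
          ((T.label_nodeOf s c).trans hM)
        exact Or.inr ⟨not_mem_E hs, hM, hs⟩
      · exact Or.inl hM

theorem laminarPair_setOf_isFlip (σ τ : C × Bool) :
    LaminarPair {s | ∃ e, T.IsFlip σ e ∧ RootedAnc T.parent e (T.nodeOf s)}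
      {s | ∃ e, T.IsFlip τ e ∧ RootedAnc T.parent e (T.nodeOf s)} := by
  rcases Set.eq_empty_or_nonempty ({s | ∃ e, T.IsFlip σ e ∧ RootedAnc T.parent e (T.nodeOf s)} ∩
      {s | ∃ e, T.IsFlip τ e ∧ RootedAnc T.parent e (T.nodeOf s)}) with
    h | ⟨s₀, ⟨e, he, hes₀⟩, e', he', hes₀'⟩
  · exact Or.inl h
  · right
    rcases hes₀.total hes₀' with hee' | he'e
    · right
      rintro s ⟨f, hf, hfs⟩
      exact ⟨e, he, hee'.trans (hf.eq he' ▸ hfs)⟩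
    · left
      rintro s ⟨f, hf, hfs⟩
      exact ⟨e', he', he'e.trans (hf.eq he ▸ hfs)⟩

theorem laminarCompletion_completion {E : Set (S × C)} (hT : T.consistent E) :
    LaminarCompletion M E T.completion := fun σ τ => by
  rw [colOf_completion hT, colOf_completion hT]
  exact laminarPair_setOf_isFlip σ τ

end PPTree

namespace Finset

variable {α : Type*} (𝒩 : Finset (Finset α))

noncomputable def cardSorted : List (Finset α) :=
  𝒩.toList.mergeSort fun A B => decide (A.card ≤ B.card)

noncomputable def cardSortedAt (i : ℕ) : Finset α := (cardSorted 𝒩).getD i ∅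

variable [DecidableEq α] in
/-- When the members of `𝒩` below any member form a chain, this is the parent in the Hasse
diagram of `𝒩`. -/
noncomputable def cardSortedParent (i : ℕ) : ℕ :=
  Nat.findGreatest (fun j => cardSortedAt 𝒩 j ⊂ cardSortedAt 𝒩 i) i

variable {𝒩}

theorem length_cardSorted : (cardSorted 𝒩).length = 𝒩.card := by
  rw [cardSorted, List.length_mergeSort, Finset.length_toList]

theorem cardSortedAt_eq_getElem {i : ℕ} (hi : i < 𝒩.card) :
    cardSortedAt 𝒩 i = (cardSorted 𝒩)[i]'(by rwa [length_cardSorted]) :=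
  List.getD_eq_getElem _ _ _

theorem cardSortedAt_mem {i : ℕ} (hi : i < 𝒩.card) : cardSortedAt 𝒩 i ∈ 𝒩 := by
  rw [cardSortedAt_eq_getElem hi, ← Finset.mem_toList, ← List.mem_mergeSort]
  exact List.getElem_mem _

theorem exists_cardSortedAt_eq {A : Finset α} (hA : A ∈ 𝒩) :
    ∃ i < 𝒩.card, cardSortedAt 𝒩 i = A := by
  rw [← Finset.mem_toList, ← List.mem_mergeSort (le := fun A B => decide (A.card ≤ B.card)),
    List.mem_iff_getElem] at hA
  obtain ⟨i, hi, rfl⟩ := hA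
  have hi' : i < 𝒩.card := by rwa [← length_cardSorted]
  exact ⟨i, hi', cardSortedAt_eq_getElem hi'⟩

theorem eq_of_cardSortedAt_eq {i j : ℕ} (hi : i < 𝒩.card) (hj : j < 𝒩.card)
    (h : cardSortedAt 𝒩 i = cardSortedAt 𝒩 j) : i = j := by
  rw [cardSortedAt_eq_getElem hi, cardSortedAt_eq_getElem hj] at h
  exact ((List.mergeSort_perm _ _).nodup_iff.mpr 𝒩.nodup_toList).getElem_inj_iff.mp h

theorem lt_of_card_cardSortedAt_lt {i j : ℕ} (hi : i < 𝒩.card) (hj : j < 𝒩.card)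
    (h : (cardSortedAt 𝒩 i).card < (cardSortedAt 𝒩 j).card) : i < j := by
  by_contra! hji
  have hsorted := List.pairwise_iff_getElem.mp (List.pairwise_mergeSort
    (le := fun A B : Finset α => decide (A.card ≤ B.card))
    (fun _ _ _ h h' => by simp only [decide_eq_true_eq] at *; omega)
    (fun _ _ => by simp only [Bool.or_eq_true, decide_eq_true_eq]; omega) 𝒩.toList)
  rcases hji.lt_or_eq with hji | rfl
  · have := hsorted j i (by rwa [List.length_mergeSort, Finset.length_toList])
      (by rwa [List.length_mergeSort, Finset.length_toList]) hji
    rw [decide_eq_true_eq] at this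
    rw [cardSortedAt_eq_getElem hi, cardSortedAt_eq_getElem hj] at h
    exact absurd this (not_le.mpr h)
  · exact lt_irrefl _ h

theorem cardSortedAt_zero (hempty : ∅ ∈ 𝒩) : cardSortedAt 𝒩 0 = ∅ := by
  obtain ⟨j, hj, hjempty⟩ := exists_cardSortedAt_eq hempty
  by_contra h
  have := lt_of_card_cardSortedAt_lt hj (Finset.card_pos.mpr ⟨_, hempty⟩)
    (by rw [hjempty, Finset.card_empty, Finset.card_pos, Finset.nonempty_iff_ne_empty]; exact h)
  omega

theorem cardSortedAt_ne_empty (hempty : ∅ ∈ 𝒩) {i : ℕ} (hi0 : 0 < i) (hi : i < 𝒩.card) :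
    cardSortedAt 𝒩 i ≠ ∅ := fun h =>
  hi0.ne (eq_of_cardSortedAt_eq (Finset.card_pos.mpr ⟨_, hempty⟩) hi
    (by rw [h, cardSortedAt_zero hempty]))

variable [DecidableEq α]

theorem cardSortedParent_le (i : ℕ) : cardSortedParent 𝒩 i ≤ i := Nat.findGreatest_le i

theorem cardSortedParent_zero : cardSortedParent 𝒩 0 = 0 := Nat.findGreatest_zero

theorem cardSortedAt_parent_ssubset (hempty : ∅ ∈ 𝒩) {i : ℕ} (hi0 : 0 < i) (hi : i < 𝒩.card) :
    cardSortedAt 𝒩 (cardSortedParent 𝒩 i) ⊂ cardSortedAt 𝒩 i :=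
  Nat.findGreatest_spec (P := fun j => cardSortedAt 𝒩 j ⊂ cardSortedAt 𝒩 i) (Nat.zero_le i)
    (by rw [cardSortedAt_zero hempty, Finset.empty_ssubset, Finset.nonempty_iff_ne_empty]
        exact cardSortedAt_ne_empty hempty hi0 hi)

theorem cardSortedAt_parent_subset (hempty : ∅ ∈ 𝒩) (i : ℕ) :
    cardSortedAt 𝒩 (cardSortedParent 𝒩 i) ⊆ cardSortedAt 𝒩 i := by
  by_cases h : cardSortedParent 𝒩 i = 0
  · rw [h, cardSortedAt_zero hempty]
    exact Finset.empty_subset _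
  · exact (Nat.findGreatest_of_ne_zero rfl h).subset

theorem cardSortedParent_lt (hempty : ∅ ∈ 𝒩) {i : ℕ} (hi0 : 0 < i) (hi : i < 𝒩.card) :
    cardSortedParent 𝒩 i < i :=
  (cardSortedParent_le i).lt_of_ne fun h => by
    simpa [h] using cardSortedAt_parent_ssubset hempty hi0 hi

theorem subset_cardSortedAt_parent (hchain : ∀ N ∈ 𝒩, IsChain (· ⊆ ·) {A | A ∈ 𝒩 ∧ A ⊆ N})
    (hempty : ∅ ∈ 𝒩) {i : ℕ} (hi : i < 𝒩.card) {B : Finset α} (hB : B ∈ 𝒩)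
    (hBi : B ⊂ cardSortedAt 𝒩 i) : B ⊆ cardSortedAt 𝒩 (cardSortedParent 𝒩 i) := by
  have hi0 : 0 < i := Nat.pos_of_ne_zero fun h => by
    simp [h, cardSortedAt_zero hempty] at hBi
  obtain ⟨j, hj, rfl⟩ := exists_cardSortedAt_eq hB
  have hpi := cardSortedAt_parent_ssubset hempty hi0 hi
  rcases (hchain _ (cardSortedAt_mem hi)).total ⟨hB, hBi.subset⟩
    ⟨cardSortedAt_mem ((cardSortedParent_lt hempty hi0 hi).trans hi), hpi.subset⟩ with h | h
  · exact h
  · rcases h.eq_or_ssubset with h | h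
    · exact h.ge
    · have hji : j ≤ i := (lt_of_card_cardSortedAt_lt hj hi (Finset.card_lt_card hBi)).le
      have := lt_of_card_cardSortedAt_lt
        (cardSortedParent_le i |>.trans_lt hi) hj (Finset.card_lt_card h)
      have := Nat.le_findGreatest (P := fun j => cardSortedAt 𝒩 j ⊂ cardSortedAt 𝒩 i) hji hBi
      exact absurd this (not_le.mpr ‹_›)

theorem ancRel_cardSortedParent_iff (hchain : ∀ N ∈ 𝒩, IsChain (· ⊆ ·) {A | A ∈ 𝒩 ∧ A ⊆ N})
    (hempty : ∅ ∈ 𝒩) {i j : ℕ} (hi : i < 𝒩.card) (hj : j < 𝒩.card) :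
    AncRel (cardSortedParent 𝒩) i j ↔ cardSortedAt 𝒩 i ⊆ cardSortedAt 𝒩 j := by
  constructor
  · rintro ⟨k, rfl⟩
    clear hi
    induction k with
    | zero => exact Finset.Subset.refl _
    | succ k ih =>
      rw [Function.iterate_succ_apply']
      exact (cardSortedAt_parent_subset hempty _).trans ih
  · induction j using Nat.strong_induction_on with
    | _ j ih =>
      intro hij
      rcases hij.eq_or_ssubset with h | h
      · exact ⟨0, (eq_of_cardSortedAt_eq hj hi h.symm)⟩
      · have hj0 : 0 < j := Nat.pos_of_ne_zero fun h0 => by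
          simp [h0, cardSortedAt_zero hempty] at h
        have hpj := cardSortedParent_lt hempty hj0 hj
        obtain ⟨k, hk⟩ := ih _ hpj (hpj.trans hj)
          (subset_cardSortedAt_parent hchain hempty hj (cardSortedAt_mem hi) h)
        exact ⟨k + 1, by rwa [Function.iterate_succ_apply]⟩

end Finset

theorem colMinus_subset_colPlus {S C : Type*} (M : S → C → Bool) (E : Set (S × C))
    (f : S → C → Prop) (c : C) : ColMinus M E f c ⊆ ColPlus M E f c :=
  fun _ h => Or.inr h

namespace Completion

open scoped Classical

variable {S C : Type*} (M : S → C → Bool) (E : Set (S × C)) (f : S → C → Prop)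

noncomputable def labelOf (N : Finset (C × Bool)) (c : C) : Bool :=
  decide ((c, true) ∈ N ∧ (c, false) ∉ N)

def eraseOn (P : Set C) (K : Set S) (s : S) (c : C) : Prop := f s c ∧ ¬ (c ∈ P ∧ s ∈ K)

theorem labelOf_empty (c : C) : labelOf (∅ : Finset (C × Bool)) c = false := by
  simp [labelOf]

theorem labelOf_inter {A B : Finset (C × Bool)} (h : labelOf A = labelOf B) :
    labelOf (A ∩ B) = labelOf A := by
  funext c
  have hc := congrFun h c
  simp only [labelOf, Finset.mem_inter, decide_eq_decide] at hc ⊢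
  tauto

section Reduction

variable {M E f} {P : Set C} {K : Set S}

theorem colOf_eraseOn (hK : ∀ c ∈ P, ∀ s ∈ K, M s c = false) (σ : C × Bool) :
    ColOf M E (eraseOn f P K) σ = if σ.1 ∈ P then ColOf M E f σ \ K else ColOf M E f σ := by
  obtain ⟨c, _ | _⟩ := σ <;> ext s <;> by_cases hc : c ∈ P <;>
    simp only [ColOf, ColPlus, ColMinus, eraseOn, hc, if_true, if_false, Bool.false_eq_true,
      Set.mem_ofPred_eq, Set.mem_sdiff, true_and, false_and, not_false_eq_true, and_true]
  · tauto
  · constructor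
    · rintro (h | ⟨h1, h2, h3, h4⟩)
      · exact ⟨Or.inl h, fun hs => by simp [hK c hc s hs] at h⟩
      · exact ⟨Or.inr ⟨h1, h2, h3⟩, h4⟩
    · rintro ⟨h | h, hs⟩
      · exact Or.inl h
      · exact Or.inr ⟨h.1, h.2.1, h.2.2, hs⟩

theorem laminarCompletion_eraseOn (hf : LaminarCompletion M E f)
    (hK : ∀ c ∈ P, ∀ s ∈ K, M s c = false) (hKlam : ∀ σ, LaminarPair (ColOf M E f σ) K)
    (hmid : ∀ σ τ : C × Bool, σ.1 ∈ P → τ.1 ∉ P →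
      K ⊆ ColOf M E f τ → ¬ ColOf M E f τ ⊆ ColOf M E f σ) :
    LaminarCompletion M E (eraseOn f P K) := by
  intro σ τ
  rw [colOf_eraseOn hK, colOf_eraseOn hK]
  by_cases hσ : σ.1 ∈ P <;> by_cases hτ : τ.1 ∈ P <;> simp only [hσ, hτ, if_true, if_false]
  · exact (hf σ τ).diff K
  · exact (hf σ τ).diff_left (hKlam τ) (hmid σ τ hσ hτ)
  · exact ((hf τ σ).diff_left (hKlam σ) (hmid τ σ hτ hσ)).symm
  · exact hf σ τ

end Reduction

variable [Fintype C]

noncomputable def commonCols (Z : Set S) : Finset (C × Bool) :=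
  Finset.univ.filter fun σ => Z ⊆ ColOf M E f σ

/-- A node of the phylogeny built from the completion, encoded as the set of signed characters
on its root path. -/
def IsNode (N : Finset (C × Bool)) : Prop :=
  N = ∅ ∨ ∃ Z : Set S, Z.Nonempty ∧ N = commonCols M E f Z

noncomputable def numPersistent [Finite S] : ℕ := ∑ c, (ColMinus M E f c).ncard

variable {M E f}

theorem mem_commonCols {Z : Set S} {σ : C × Bool} :
    σ ∈ commonCols M E f Z ↔ Z ⊆ ColOf M E f σ := by
  simp [commonCols]

theorem isNode_commonCols {Z : Set S} (hZ : Z.Nonempty) : IsNode M E f (commonCols M E f Z) :=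
  Or.inr ⟨Z, hZ, rfl⟩

namespace IsNode

theorem empty : IsNode M E f ∅ := Or.inl rfl

theorem inter {A B : Finset (C × Bool)} (hA : IsNode M E f A) (hB : IsNode M E f B) :
    IsNode M E f (A ∩ B) := by
  rcases hA with rfl | ⟨Z, hZ, rfl⟩
  · simpa using empty
  rcases hB with rfl | ⟨Z', -, rfl⟩
  · simpa using empty
  have : commonCols M E f Z ∩ commonCols M E f Z' = commonCols M E f (Z ∪ Z') := by
    ext σ
    simp [mem_commonCols, Set.union_subset_iff]
  exact this ▸ isNode_commonCols (hZ.mono Set.subset_union_left)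

theorem exists_forall_mem {N : Finset (C × Bool)} (hN : IsNode M E f N) (hne : N.Nonempty) :
    ∃ s, ∀ σ ∈ N, s ∈ ColOf M E f σ := by
  rcases hN with rfl | ⟨Z, ⟨s, hs⟩, rfl⟩
  · exact absurd hne Finset.not_nonempty_empty
  · exact ⟨s, fun σ hσ => mem_commonCols.mp hσ hs⟩

theorem mem_of_colOf_subset {N : Finset (C × Bool)} (hN : IsNode M E f N) {σ τ : C × Bool}
    (hσ : σ ∈ N) (hστ : ColOf M E f σ ⊆ ColOf M E f τ) : τ ∈ N := by
  rcases hN with rfl | ⟨Z, -, rfl⟩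
  · simp at hσ
  · exact mem_commonCols.mpr ((mem_commonCols.mp hσ).trans hστ)

theorem true_mem {N : Finset (C × Bool)} (hN : IsNode M E f N) {c : C} (hc : (c, false) ∈ N) :
    (c, true) ∈ N :=
  hN.mem_of_colOf_subset hc (colMinus_subset_colPlus M E f c)

theorem isChain (hf : LaminarCompletion M E f) {N : Finset (C × Bool)} (hN : IsNode M E f N) :
    IsChain (· ⊆ ·) {A | IsNode M E f A ∧ A ⊆ N} := by
  rintro A ⟨hA, hAN⟩ B ⟨hB, hBN⟩ -
  by_contra! h
  obtain ⟨σ, hσA, hσB⟩ := Finset.not_subset.mp h.1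
  obtain ⟨τ, hτB, hτA⟩ := Finset.not_subset.mp h.2
  obtain ⟨s, hs⟩ := hN.exists_forall_mem ⟨σ, hAN hσA⟩
  rcases (hf σ τ).subset_or_subset ⟨s, hs σ (hAN hσA), hs τ (hBN hτB)⟩ with hστ | hτσ
  · exact hτA (hA.mem_of_colOf_subset hσA hστ)
  · exact hσB (hB.mem_of_colOf_subset hτB hτσ)

end IsNode

theorem labelOf_commonCols_singleton (s : S) : labelOf (commonCols M E f {s}) = M s := by
  funext c
  simp only [labelOf, mem_commonCols, Set.singleton_subset_iff, ColOf, ColPlus, ColMinus,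
    if_true, if_false, Bool.false_eq_true]
  by_cases h : M s c = true <;> simp [h]

section Minimal

theorem mem_sdiff_iff_false_mem_sdiff {N₀ N₁ : Finset (C × Bool)} (h₀ : IsNode M E f N₀)
    (h₁ : IsNode M E f N₁) (hlab : labelOf N₀ = labelOf N₁) (σ : C × Bool) :
    σ ∈ N₁ \ N₀ ↔ (σ.1, false) ∈ N₁ \ N₀ := by
  obtain ⟨c, _ | _⟩ := σ
  · rfl
  have hc := congrFun hlab c
  have h₀c : (c, false) ∈ N₀ → (c, true) ∈ N₀ := h₀.true_mem
  have h₁c : (c, false) ∈ N₁ → (c, true) ∈ N₁ := h₁.true_mem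
  simp only [labelOf, decide_eq_decide, Finset.mem_sdiff] at hc ⊢
  tauto

variable [Finite S]

theorem numPersistent_eraseOn_lt {P : Set C} {K : Set S}
    (hK : ∀ c ∈ P, ∀ s ∈ K, M s c = false) {c₀ : C} (hc₀ : c₀ ∈ P)
    (hK₀ : (ColMinus M E f c₀ ∩ K).Nonempty) :
    numPersistent M E (eraseOn f P K) < numPersistent M E f := by
  have hminus (c : C) : ColMinus M E (eraseOn f P K) c =
      if c ∈ P then ColMinus M E f c \ K else ColMinus M E f c :=
    colOf_eraseOn hK (c, false)
  refine Finset.sum_lt_sum (fun c _ => ?_) ⟨c₀, Finset.mem_univ _, ?_⟩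
  · rw [hminus]
    split_ifs
    exacts [Set.ncard_le_ncard Set.sdiff_subset, le_rfl]
  · rw [hminus, if_pos hc₀]
    obtain ⟨s, hs, hsK⟩ := hK₀
    exact Set.ncard_lt_ncard ⟨Set.sdiff_subset, fun h => (h hs).2 hsK⟩

/-- Erase the pairs `c⁺, c⁻` by which the nodes differ on the smallest of their `c⁻` columns. -/
theorem exists_numPersistent_lt (hf : LaminarCompletion M E f)
    {N₀ N₁ : Finset (C × Bool)} (h₀ : IsNode M E f N₀) (h₁ : IsNode M E f N₁) (hsub : N₀ ⊆ N₁)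
    (hlab : labelOf N₀ = labelOf N₁) (hne : N₀ ≠ N₁) :
    ∃ g, LaminarCompletion M E g ∧ numPersistent M E g < numPersistent M E f := by
  have hD := mem_sdiff_iff_false_mem_sdiff h₀ h₁ hlab
  set P : Finset C := Finset.univ.filter fun c => (c, false) ∈ N₁ \ N₀
  have hP (σ : C × Bool) : σ.1 ∈ P ↔ σ ∈ N₁ \ N₀ := by simp [P, hD]
  obtain ⟨σ, hσ⟩ : (N₁ \ N₀).Nonempty :=
    Finset.sdiff_nonempty.mpr fun h => hne (Finset.Subset.antisymm hsub h)
  obtain ⟨c₀, hc₀, hc₀min⟩ :=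
    P.exists_min_image (fun c => (ColMinus M E f c).ncard) ⟨σ.1, (hP σ).mpr hσ⟩
  obtain ⟨Z, ⟨v, hv⟩, rfl⟩ :=
    h₁.resolve_left (Finset.ne_empty_of_mem (Finset.mem_sdiff.mp hσ).1)
  set K := ColMinus M E f c₀
  have hZK : Z ⊆ K := mem_commonCols.mp (Finset.mem_sdiff.mp ((hP (c₀, false)).mp hc₀)).1
  have hKsub (c : C) (hc : c ∈ P) : K ⊆ ColMinus M E f c :=
    (hf (c₀, false) (c, false)).subset_of_ncard_le
      ⟨v, hZK hv, mem_commonCols.mp (Finset.mem_sdiff.mp ((hP (c, false)).mp hc)).1 hv⟩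
      (hc₀min c hc) (Set.toFinite _)
  have hKM (c : C) (hc : c ∈ (P : Set C)) (s : S) (hs : s ∈ K) : M s c = false :=
    (hKsub c hc hs).2.1
  refine ⟨eraseOn f P K, laminarCompletion_eraseOn hf hKM (fun σ => hf σ (c₀, false)) ?_,
    numPersistent_eraseOn_lt hKM hc₀ ⟨v, hZK hv, hZK hv⟩⟩
  intro σ τ hσ hτ hKτ hτσ
  have hτ₁ : τ ∈ commonCols M E f Z := mem_commonCols.mpr (hZK.trans hKτ)
  have hτ₀ : τ ∈ N₀ := by
    by_contra h
    exact hτ ((hP τ).mpr (Finset.mem_sdiff.mpr ⟨hτ₁, h⟩))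
  exact (Finset.mem_sdiff.mp ((hP σ).mp hσ)).2 (h₀.mem_of_colOf_subset hτ₀ hτσ)

theorem eq_of_subset_of_labelOf_eq (hf : LaminarCompletion M E f)
    (hmin : ∀ g, LaminarCompletion M E g → numPersistent M E f ≤ numPersistent M E g)
    {N₀ N₁ : Finset (C × Bool)} (h₀ : IsNode M E f N₀) (h₁ : IsNode M E f N₁) (hsub : N₀ ⊆ N₁)
    (hlab : labelOf N₀ = labelOf N₁) : N₀ = N₁ := by
  by_contra hne
  obtain ⟨g, hg, hlt⟩ := exists_numPersistent_lt hf h₀ h₁ hsub hlab hne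
  exact (hmin g hg).not_gt hlt

theorem eq_of_labelOf_eq (hf : LaminarCompletion M E f)
    (hmin : ∀ g, LaminarCompletion M E g → numPersistent M E f ≤ numPersistent M E g)
    {A B : Finset (C × Bool)} (hA : IsNode M E f A) (hB : IsNode M E f B)
    (hlab : labelOf A = labelOf B) : A = B := by
  have hAB := eq_of_subset_of_labelOf_eq hf hmin (hA.inter hB) hA Finset.inter_subset_left
    (labelOf_inter hlab)
  have hBA := eq_of_subset_of_labelOf_eq hf hmin (hB.inter hA) hB Finset.inter_subset_left
    (labelOf_inter hlab.symm)
  exact hAB.symm.trans ((Finset.inter_comm A B).trans hBA)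

end Minimal

section Tree

variable (M E f)

noncomputable def nodes : Finset (Finset (C × Bool)) := Finset.univ.filter (IsNode M E f)

variable {M E f}

local notation "𝒩" => nodes M E f
local notation "node" => Finset.cardSortedAt (nodes M E f)
local notation "par" => Finset.cardSortedParent (nodes M E f)

theorem mem_nodes {N : Finset (C × Bool)} : N ∈ 𝒩 ↔ IsNode M E f N := by simp [nodes]

theorem empty_mem_nodes : ∅ ∈ 𝒩 := mem_nodes.mpr IsNode.empty

theorem isChain_nodes (hf : LaminarCompletion M E f) (N : Finset (C × Bool)) (hN : N ∈ 𝒩) :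
    IsChain (· ⊆ ·) {A | A ∈ 𝒩 ∧ A ⊆ N} := by
  simpa only [mem_nodes] using (mem_nodes.mp hN).isChain hf

theorem isNode_cardSortedAt {i : ℕ} (hi : i < (𝒩).card) : IsNode M E f (node i) :=
  mem_nodes.mp (Finset.cardSortedAt_mem hi)

theorem cardSortedAt_subset_of_mem (hf : LaminarCompletion M E f) {i : ℕ} (hi : i < (𝒩).card)
    {σ : C × Bool} (hσ : σ ∈ node i) (hσp : σ ∉ node (par i)) {N : Finset (C × Bool)}
    (hN : IsNode M E f N) (hσN : σ ∈ N) : node i ⊆ N := by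
  by_contra h
  have hss : node i ∩ N ⊂ node i :=
    Finset.ssubset_iff_subset_ne.mpr ⟨Finset.inter_subset_left, mt Finset.inter_eq_left.mp h⟩
  exact hσp (Finset.subset_cardSortedAt_parent (isChain_nodes hf) empty_mem_nodes hi
    (mem_nodes.mpr ((isNode_cardSortedAt hi).inter hN)) hss (Finset.mem_inter.mpr ⟨hσ, hσN⟩))

theorem eq_of_mem_of_not_mem (hf : LaminarCompletion M E f) {i j : ℕ} (hi : i < (𝒩).card)
    (hj : j < (𝒩).card) {σ : C × Bool} (hσi : σ ∈ node i) (hσpi : σ ∉ node (par i))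
    (hσj : σ ∈ node j) (hσpj : σ ∉ node (par j)) : i = j :=
  Finset.eq_of_cardSortedAt_eq hi hj <| Finset.Subset.antisymm
    (cardSortedAt_subset_of_mem hf hi hσi hσpi (isNode_cardSortedAt hj) hσj)
    (cardSortedAt_subset_of_mem hf hj hσj hσpj (isNode_cardSortedAt hi) hσi)

theorem exists_mem_not_mem_parent {σ : C × Bool} {i : ℕ} (hi : i < (𝒩).card)
    (hσ : σ ∈ node i) : ∃ g < (𝒩).card, σ ∈ node g ∧ σ ∉ node (par g) ∧ node g ⊆ node i := by
  induction i using Nat.strong_induction_on with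
  | _ i ih =>
    have hi0 : 0 < i := Nat.pos_of_ne_zero fun h => by
      simp [h, Finset.cardSortedAt_zero empty_mem_nodes] at hσ
    by_cases hσp : σ ∈ node (par i)
    · have hpi := Finset.cardSortedParent_lt empty_mem_nodes hi0 hi
      obtain ⟨g, hg, hσg, hσpg, hgp⟩ := ih _ hpi (hpi.trans hi) hσp
      exact ⟨g, hg, hσg, hσpg,
        hgp.trans (Finset.cardSortedAt_parent_subset empty_mem_nodes i)⟩
    · exact ⟨i, hi, hσ, hσp, Finset.Subset.refl _⟩

theorem mem_not_mem_of_labelOf_ne {i : ℕ} {c : C}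
    (h : labelOf (node (par i)) c ≠ labelOf (node i) c) (hi : i < (𝒩).card) :
    (c, labelOf (node i) c) ∈ node i ∧ (c, labelOf (node i) c) ∉ node (par i) := by
  have hsub : node (par i) ⊆ node i := Finset.cardSortedAt_parent_subset empty_mem_nodes i
  have hcl : (c, false) ∈ node i → (c, true) ∈ node i :=
    (isNode_cardSortedAt hi).true_mem
  have h1 := @hsub (c, true)
  have h2 := @hsub (c, false)
  revert h
  unfold labelOf
  by_cases ht : (c, true) ∈ node i <;> by_cases hf : (c, false) ∈ node i <;>
    simp_all

theorem eq_of_labelOf_ne (hf : LaminarCompletion M E f) {i j : ℕ} (hi : i < (𝒩).card)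
    (hj : j < (𝒩).card) {c : C}
    (hci : labelOf (node (par i)) c ≠ labelOf (node i) c)
    (hcj : labelOf (node (par j)) c ≠ labelOf (node j) c)
    (hij : labelOf (node i) c = labelOf (node j) c) : i = j := by
  obtain ⟨hσi, hσpi⟩ := mem_not_mem_of_labelOf_ne hci hi
  obtain ⟨hσj, hσpj⟩ := mem_not_mem_of_labelOf_ne hcj hj
  rw [hij] at hσi hσpi
  exact eq_of_mem_of_not_mem hf hi hj hσi hσpi hσj hσpj

theorem ancRel_of_labelOf_ne (hf : LaminarCompletion M E f) {i j : ℕ} (hi : i < (𝒩).card)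
    (hj : j < (𝒩).card) {c : C}
    (hci : labelOf (node (par i)) c ≠ labelOf (node i) c)
    (hcj : labelOf (node (par j)) c ≠ labelOf (node j) c)
    (hti : labelOf (node i) c = true) (hfj : labelOf (node j) c = false) :
    AncRel par i j := by
  obtain ⟨hσi, hσpi⟩ := mem_not_mem_of_labelOf_ne hci hi
  rw [hti] at hσi hσpi
  have hσj := (isNode_cardSortedAt hj).true_mem (hfj ▸ (mem_not_mem_of_labelOf_ne hcj hj).1)
  exact (Finset.ancRel_cardSortedParent_iff (isChain_nodes hf) empty_mem_nodes hi hj).mpr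
    (cardSortedAt_subset_of_mem hf hi hσi hσpi (isNode_cardSortedAt hj) hσj)

theorem exists_gain_edge {i : ℕ} (hi : i < (𝒩).card) {c : C}
    (hp : labelOf (node (par i)) c = true) :
    ∃ g < (𝒩).card, labelOf (node (par g)) c ≠ labelOf (node g) c ∧ labelOf (node g) c = true := by
  simp only [labelOf, decide_eq_true_eq] at hp
  obtain ⟨g, hg, hcg, hcpg, hgp⟩ := exists_mem_not_mem_parent
    ((Finset.cardSortedParent_le i).trans_lt hi) hp.1
  have hg_true : labelOf (node g) c = true := by
    simp only [labelOf, decide_eq_true_eq]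
    exact ⟨hcg, fun h => hp.2 (hgp h)⟩
  exact ⟨g, hg, by rw [hg_true]; simp [labelOf, hcpg], hg_true⟩

variable [Finite S]

theorem cardSortedAt_eq_commonCols_singleton (hf : LaminarCompletion M E f)
    (hmin : ∀ g, LaminarCompletion M E g → numPersistent M E f ≤ numPersistent M E g)
    {x : ℕ} (hx : x < (𝒩).card) {s : S} (hlab : ∀ c, labelOf (node x) c = M s c) :
    node x = commonCols M E f {s} :=
  eq_of_labelOf_eq hf hmin (isNode_cardSortedAt hx)
    (isNode_commonCols (Set.singleton_nonempty s))
    (funext fun c => by rw [hlab, labelOf_commonCols_singleton])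

variable (M E f) in
noncomputable def toPPTree (hf : LaminarCompletion M E f)
    (hmin : ∀ g, LaminarCompletion M E g → numPersistent M E f ≤ numPersistent M E g) :
    PPTree S C M where
  n := (𝒩).card
  n_pos := Finset.card_pos.mpr ⟨_, empty_mem_nodes⟩
  parent := par
  parent_lt _ hi0 hi := Finset.cardSortedParent_lt empty_mem_nodes hi0 hi
  label i := labelOf (node i)
  root_label c := by rw [Finset.cardSortedAt_zero empty_mem_nodes]; exact labelOf_empty c
  changes_le_two c i j k hi hj hk := by
    by_cases hij : labelOf (node i) c = labelOf (node j) c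
    · exact Or.inl (eq_of_labelOf_ne hf hi.2.1 hj.2.1 hi.2.2 hj.2.2 hij)
    by_cases hik : labelOf (node i) c = labelOf (node k) c
    · exact Or.inr (Or.inl (eq_of_labelOf_ne hf hi.2.1 hk.2.1 hi.2.2 hk.2.2 hik))
    exact Or.inr (Or.inr (eq_of_labelOf_ne hf hj.2.1 hk.2.1 hj.2.2 hk.2.2
      ((Bool.eq_not_iff.mpr (Ne.symm hij)).trans (Bool.eq_not_iff.mpr (Ne.symm hik)).symm)))
  changes_on_path c i j hi hj hne := by
    have hij : labelOf (node j) c = !labelOf (node i) c :=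
      Bool.eq_not_iff.mpr fun h => hne (eq_of_labelOf_ne hf hi.2.1 hj.2.1 hi.2.2 hj.2.2 h.symm)
    have hpi := Bool.eq_not_iff.mpr hi.2.2
    have hpj := Bool.eq_not_iff.mpr hj.2.2
    cases hci : labelOf (node i) c
    · rw [hci] at hpi hij
      rw [hij] at hpj
      exact Or.inr ⟨ancRel_of_labelOf_ne hf hj.2.1 hi.2.1 hj.2.2 hi.2.2 hij hci, hpj, hij, hpi, rfl⟩
    · rw [hci] at hpi hij
      rw [hij] at hpj
      exact Or.inl ⟨ancRel_of_labelOf_ne hf hi.2.1 hj.2.1 hi.2.2 hj.2.2 hci hij, hpi, rfl, hpj, hij⟩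
  single_change_gain c i hi huniq := by
    have hci : labelOf (node i) c = true := by
      by_contra h
      rw [Bool.not_eq_true] at h
      obtain ⟨g, hg, hcg, hg_true⟩ := exists_gain_edge hi.2.1
        ((Bool.eq_not_iff.mpr hi.2.2).trans (by rw [h]; rfl))
      have hg0 : 0 < g :=
        Nat.pos_of_ne_zero fun h0 => hcg (by rw [h0, Finset.cardSortedParent_zero])
      rw [huniq g ⟨hg0, hg, hcg⟩, h] at hg_true
      exact Bool.false_ne_true hg_true
    exact ⟨(Bool.eq_not_iff.mpr hi.2.2).trans (by rw [hci]; rfl), hci⟩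
  rows_label s := by
    obtain ⟨i, hi, hsi⟩ := Finset.exists_cardSortedAt_eq
      (mem_nodes.mpr (isNode_commonCols (M := M) (E := E) (f := f) (Set.singleton_nonempty s)))
    refine ⟨i, ⟨hi, fun c => by rw [hsi, labelOf_commonCols_singleton]⟩, fun j ⟨hj, hjs⟩ => ?_⟩
    refine Finset.eq_of_cardSortedAt_eq hj hi ?_
    rw [cardSortedAt_eq_commonCols_singleton hf hmin hj hjs, hsi]

theorem toPPTree_consistent (hf : LaminarCompletion M E f)
    (hmin : ∀ g, LaminarCompletion M E g → numPersistent M E f ≤ numPersistent M E g) :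
    (toPPTree M E f hf hmin).consistent E := by
  rintro ⟨s, c⟩ hsc x hx hlab ⟨-, j, -, hj, hjx, hpj, hjl⟩
  change labelOf (node (par j)) c = true at hpj
  change labelOf (node j) c = false at hjl
  have hmem := (mem_not_mem_of_labelOf_ne (by rw [hpj, hjl]; decide) hj).1
  rw [hjl] at hmem
  have hsub := (Finset.ancRel_cardSortedParent_iff (isChain_nodes hf) empty_mem_nodes hj hx).mp hjx
  rw [cardSortedAt_eq_commonCols_singleton hf hmin hx hlab] at hsub
  exact (mem_commonCols.mp (hsub hmem) rfl).1 hsc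

end Tree

theorem exists_minimal_laminarCompletion [Finite S] (hf : LaminarCompletion M E f) :
    ∃ g, LaminarCompletion M E g ∧
      ∀ g', LaminarCompletion M E g' → numPersistent M E g ≤ numPersistent M E g' := by
  have hex : ∃ m, ∃ g, LaminarCompletion M E g ∧ numPersistent M E g = m := ⟨_, f, hf, rfl⟩
  obtain ⟨g, hg, hgm⟩ := Nat.find_spec hex
  exact ⟨g, hg, fun g' hg' => hgm ▸ Nat.find_min' hex ⟨g', hg', rfl⟩⟩

end Completion

theorem stmt2_general {S C : Type*} [Fintype S] [Fintype C] (M : S → C → Bool)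
    (E : Set (S × C)) :
    (∃ T : PPTree S C M, T.consistent E) ↔
      ∃ f : S → C → Prop, LaminarCompletion M E f := by
  constructor
  · rintro ⟨T, hT⟩
    exact ⟨T.completion, PPTree.laminarCompletion_completion hT⟩
  · rintro ⟨f, hf⟩
    obtain ⟨g, hg, hmin⟩ := Completion.exists_minimal_laminarCompletion hf
    exact ⟨Completion.toPPTree M E g hg hmin, Completion.toPPTree_consistent hg hmin⟩

/-- `(M, E)` admits a persistent perfect phylogeny consistent with
`E` iff the extended matrix of `(M, E)` admits a completion with pairwise
laminar columns. -/
theorem stmt2 {S C : Type*} [Fintype S] [Fintype C] (M : S → C → Bool)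
    (E : Set (S × C)) (hE : ∀ p ∈ E, M p.1 p.2 = false) :
    (∃ T : PPTree S C M, T.consistent E) ↔
      ∃ f : S → C → Prop, LaminarCompletion M E f :=
  stmt2_general M E
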